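/- arXiv:1209.6013 — 9 statements merged into one kernel-verified Lean document; each statement's English description precedes it below -/
import Mathlib

section
/- For any irrational α ∈ (0,1), any real ρ, and any positive integers n and i: if {-(i+1)α} < {-iα}, then the point {nα + ρ} lies in the interval [{-(i+1)α}, {-iα}) if and only if {(n+i)α + ρ} ≥ {-α} (i.e., the (n+i)-th letter of the Sturmian word s_{α,ρ} is 'a'). -/
lemma fract_ne_zero_of_irrational {x : ℝ} (hx : Irrational x) : Int.fract x ≠ 0 := by
  intro h0
  have : x = (⌊x⌋ : ℝ) := by
    have := Int.fract_add_floor x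
    rw [h0] at this; linarith
  exact hx.ne_int ⌊x⌋ this

/-- For any irrational `α ∈ (0,1)`, any real `ρ`, and positive integers
`n`, `i`: if `{-(i+1)α} < {-iα}`, then `{nα + ρ} ∈ [{-(i+1)α}, {-iα})` if and only if
`{(n+i)α + ρ} ≥ {-α}` (i.e. the `(n+i)`-th letter of the Sturmian word `s_{α,ρ}` is `a`). -/
theorem sturmian_letter_iff_interval
    (α ρ : ℝ) (hα : α ∈ Set.Ioo (0 : ℝ) 1) (hirr : Irrational α)
    (n i : ℕ) (hn : 0 < n) (hi : 0 < i)
    (h : Int.fract (-((i : ℝ) + 1) * α) < Int.fract (-(i : ℝ) * α)) :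
    Int.fract ((n : ℝ) * α + ρ) ∈
        Set.Ico (Int.fract (-((i : ℝ) + 1) * α)) (Int.fract (-(i : ℝ) * α)) ↔
      Int.fract (-α) ≤ Int.fract (((n : ℝ) + (i : ℝ)) * α + ρ) := by
  obtain ⟨hα0, hα1⟩ := hα
  have hiα : Irrational ((i : ℝ) * α) := hirr.natCast_mul hi.ne'
  have hi1α : Irrational (((i : ℝ) + 1) * α) := by
    have := hirr.natCast_mul (Nat.succ_ne_zero i)
    rwa [Nat.cast_succ] at this
  set β := Int.fract ((i : ℝ) * α) with hβ
  set γ := Int.fract (((i : ℝ) + 1) * α) with hγ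
  have hβ0 : 0 ≤ β := Int.fract_nonneg _
  have hβ1 : β < 1 := Int.fract_lt_one _
  -- rewrite the negated fracts
  have hneg_i : Int.fract (-(i : ℝ) * α) = 1 - β := by
    rw [neg_mul, Int.fract_neg (fract_ne_zero_of_irrational hiα)]
  have hneg_i1 : Int.fract (-((i : ℝ) + 1) * α) = 1 - γ := by
    rw [neg_mul, Int.fract_neg (fract_ne_zero_of_irrational hi1α)]
  have hnegα : Int.fract (-α) = 1 - α := by
    rw [Int.fract_neg (by simpa using fract_ne_zero_of_irrational hirr),
      Int.fract_eq_self.2 ⟨le_of_lt hα0, hα1⟩]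
  rw [hneg_i, hneg_i1] at h ⊢
  rw [hnegα]
  have hβγ : β < γ := by linarith
  -- γ = β + α
  have hγval : γ = β + α := by
    have key : ((i : ℝ) + 1) * α = (i : ℝ) * α - (⌊(i : ℝ) * α⌋ : ℤ) + (⌊(i : ℝ) * α⌋ : ℝ) + α := by
      push_cast; ring
    have h2 : γ = Int.fract (β + α) := by
      rw [hγ, key, add_right_comm, Int.fract_add_intCast]
      congr 1
    by_cases hc : β + α < 1
    · rw [h2, Int.fract_eq_self.2 ⟨by linarith, hc⟩]
    · exfalso
      push_neg at hc
      have : Int.fract (β + α) = β + α - 1 := by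
        have := Int.fract_sub_intCast (β + α) 1
        rw [← this, Int.fract_eq_self.2 ⟨by push_cast; linarith, by push_cast; linarith⟩]
        push_cast; ring
      rw [h2, this] at hβγ
      linarith
  have hβα : β + α < 1 := by
    rw [← hγval]; exact Int.fract_lt_one _
  set y := Int.fract ((n : ℝ) * α + ρ) with hy
  have hy0 : 0 ≤ y := Int.fract_nonneg _
  have hy1 : y < 1 := Int.fract_lt_one _
  have hfr : Int.fract (((n : ℝ) + (i : ℝ)) * α + ρ) = Int.fract (y + β) := by
    have key : y + β = (((n : ℝ) + (i : ℝ)) * α + ρ) -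
        ((⌊(n : ℝ) * α + ρ⌋ + ⌊(i : ℝ) * α⌋ : ℤ) : ℝ) := by
      rw [hy, hβ, Int.fract, Int.fract]; push_cast; ring
    rw [key, Int.fract_sub_intCast]
  rw [hfr, hγval]
  by_cases hc : y + β < 1
  · rw [Int.fract_eq_self.2 ⟨by linarith, hc⟩]
    constructor
    · rintro ⟨h1, h2⟩; linarith
    · intro h1; exact ⟨by linarith, by linarith⟩
  · push_neg at hc
    have : Int.fract (y + β) = y + β - 1 := by
      have := Int.fract_sub_intCast (y + β) 1
      rw [← this, Int.fract_eq_self.2 ⟨by push_cast; linarith, by push_cast; linarith⟩]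
      push_cast; ring
    rw [this]
    constructor
    · rintro ⟨h1, h2⟩; linarith
    · intro h1; linarith
end

section
/- Let α ∈ (0,1) be irrational and m a positive integer. Then the Parikh vector (number of a's, number of b's) of the length-m factor a_n a_{n+1} ⋯ a_{n+m-1} of the Sturmian word s_{α,0} depends only on whether {nα} ≥ {-mα} or {nα} < {-mα}. Moreover, if {nα} ≥ {-mα} the factor has exactly one more occurrence of the letter 'a' than when {nα} < {-mα}. -/
open scoped Classical

lemma floor_add_fract_split (x y : ℝ) :
    ⌊x + y⌋ = ⌊x⌋ + ⌊y⌋ + ⌊Int.fract x + Int.fract y⌋ := by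
  conv_lhs => rw [← Int.floor_add_fract x, ← Int.floor_add_fract y]
  have h : (⌊x⌋ : ℝ) + Int.fract x + ((⌊y⌋ : ℝ) + Int.fract y)
      = ((⌊x⌋ + ⌊y⌋ : ℤ) : ℝ) + (Int.fract x + Int.fract y) := by push_cast; ring
  rw [h, Int.floor_intCast_add]

lemma floor_fract_sum (u v : ℝ) (hu0 : 0 ≤ u) (hu1 : u < 1) (hv0 : 0 ≤ v) (hv1 : v < 1) :
    ⌊u + v⌋ = if 1 ≤ u + v then 1 else 0 := by
  split_ifs with h
  · rw [Int.floor_eq_iff]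
    constructor
    · exact_mod_cast h
    · push_cast; linarith
  · rw [Int.floor_eq_zero_iff]
    constructor
    · linarith
    · simpa using by linarith

lemma floor_add_small (α : ℝ) (h0 : 0 < α) (h1 : α < 1) (x : ℝ) :
    ⌊x + α⌋ = ⌊x⌋ + if 1 - α ≤ Int.fract x then 1 else 0 := by
  have hα : Int.fract α = α := Int.fract_eq_self.mpr ⟨h0.le, h1⟩
  have hfl : ⌊α⌋ = 0 := Int.floor_eq_zero_iff.mpr ⟨h0.le, h1⟩
  rw [floor_add_fract_split, hα, hfl, add_zero,
    floor_fract_sum _ _ (Int.fract_nonneg x) (Int.fract_lt_one x) h0.le h1]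
  congr 1
  by_cases h : 1 - α ≤ Int.fract x
  · rw [if_pos h, if_pos (by linarith)]
  · rw [if_neg (by intro hc; exact h (by linarith)), if_neg h]

lemma card_eq_floor (α : ℝ) (h0 : 0 < α) (h1 : α < 1) (n : ℕ) (m : ℕ) :
    (((Finset.range m).filter fun i => 1 - α ≤ Int.fract (((n + i : ℕ) : ℝ) * α)).card : ℤ)
      = ⌊((n + m : ℕ) : ℝ) * α⌋ - ⌊((n : ℕ) : ℝ) * α⌋ := by
  induction m with
  | zero => simp
  | succ k ih =>
    rw [Finset.range_add_one, Finset.filter_insert]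
    have step := floor_add_small α h0 h1 (((n + k : ℕ) : ℝ) * α)
    have e : ((n + (k + 1) : ℕ) : ℝ) * α = ((n + k : ℕ) : ℝ) * α + α := by push_cast; ring
    rw [e, step]
    split_ifs with h
    · rw [Finset.card_insert_of_notMem (by simp)]
      push_cast at ih ⊢
      omega
    · push_cast at ih ⊢
      omega

lemma parikh_fst (α : ℝ) (h0 : 0 < α) (h1 : α < 1) (hirr : Irrational α)
    (m : ℕ) (hm : 0 < m) (n : ℕ) :
    ((((Finset.range m).filter fun i => 1 - α ≤ Int.fract (((n + i : ℕ) : ℝ) * α)).card : ℤ))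
      = ⌊(m : ℝ) * α⌋ + if Int.fract (-(m : ℝ) * α) ≤ Int.fract ((n : ℝ) * α) then 1 else 0 := by
  have hmirr : Irrational ((m : ℝ) * α) := hirr.natCast_mul hm.ne'
  have hfz : Int.fract ((m : ℝ) * α) ≠ 0 := by
    intro h
    have := Int.floor_add_fract ((m : ℝ) * α)
    rw [h, add_zero] at this
    exact hmirr.ne_int ⌊(m : ℝ) * α⌋ this.symm
  have hneg : Int.fract (-(m : ℝ) * α) = 1 - Int.fract ((m : ℝ) * α) := by
    rw [neg_mul, Int.fract_neg hfz]
  have key := card_eq_floor α h0 h1 n m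
  have e : ((n + m : ℕ) : ℝ) * α = (n : ℝ) * α + (m : ℝ) * α := by push_cast; ring
  rw [e, floor_add_fract_split, floor_fract_sum _ _ (Int.fract_nonneg _) (Int.fract_lt_one _)
    (Int.fract_nonneg _) (Int.fract_lt_one _)] at key
  rw [key, hneg]
  by_cases h : 1 - Int.fract ((m : ℝ) * α) ≤ Int.fract ((n : ℝ) * α)
  · rw [if_pos h, if_pos (by linarith)]
    ring
  · rw [if_neg h, if_neg (by intro hc; exact h (by linarith))]
    ring

/-- The Parikh vector (number of `a`'s, number of `b`'s) of the length-`m` factor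
`a_n a_{n+1} ⋯ a_{n+m-1}` of the Sturmian word `s_{α,0}`, where the letter at position
`p ≥ 1` is `a` iff `{pα} ≥ {-α} = 1 - α`. -/
noncomputable def sturmParikh (α : ℝ) (n m : ℕ) : ℕ × ℕ :=
  (((Finset.range m).filter fun i => 1 - α ≤ Int.fract (((n + i : ℕ) : ℝ) * α)).card,
   ((Finset.range m).filter fun i => Int.fract (((n + i : ℕ) : ℝ) * α) < 1 - α).card)

/-- The Parikh vector of the length-`m` factor starting at position `n` of
`s_{α,0}` depends only on whether `{nα} ≥ {-mα}` or `{nα} < {-mα}`; moreover in the first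
case the factor has exactly one more `a` than in the second case. -/
theorem sturmian_parikh_dichotomy
    (α : ℝ) (hα : α ∈ Set.Ioo (0 : ℝ) 1) (hirr : Irrational α)
    (m : ℕ) (hm : 0 < m) :
    (∀ n n' : ℕ, 1 ≤ n → 1 ≤ n' →
      ((Int.fract (-(m : ℝ) * α) ≤ Int.fract ((n : ℝ) * α)) ↔
        (Int.fract (-(m : ℝ) * α) ≤ Int.fract ((n' : ℝ) * α))) →
      sturmParikh α n m = sturmParikh α n' m) ∧
    (∀ n n' : ℕ, 1 ≤ n → 1 ≤ n' →
      Int.fract (-(m : ℝ) * α) ≤ Int.fract ((n : ℝ) * α) →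
      Int.fract ((n' : ℝ) * α) < Int.fract (-(m : ℝ) * α) →
      (sturmParikh α n m).1 = (sturmParikh α n' m).1 + 1) := by
  obtain ⟨h0, h1⟩ := hα
  have hfst : ∀ n : ℕ, ((sturmParikh α n m).1 : ℤ)
      = ⌊(m : ℝ) * α⌋ + if Int.fract (-(m : ℝ) * α) ≤ Int.fract ((n : ℝ) * α) then 1 else 0 := by
    intro n
    have := parikh_fst α h0 h1 hirr m hm n
    simpa [sturmParikh] using this
  have hsum : ∀ n : ℕ, (sturmParikh α n m).1 + (sturmParikh α n m).2 = m := by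
    intro n
    have h := Finset.card_filter_add_card_filter_not
      (s := Finset.range m) (p := fun i => 1 - α ≤ Int.fract (((n + i : ℕ) : ℝ) * α))
    simp only [not_le, Finset.card_range] at h
    simpa only [sturmParikh] using h
  constructor
  · intro n n' _ _ hiff
    have e1 : (sturmParikh α n m).1 = (sturmParikh α n' m).1 := by
      have a := hfst n
      have b := hfst n'
      by_cases h : Int.fract (-(m : ℝ) * α) ≤ Int.fract ((n : ℝ) * α)
      · rw [if_pos h] at a
        rw [if_pos (hiff.mp h)] at b
        omega
      · rw [if_neg h] at a
        rw [if_neg (fun hc => h (hiff.mpr hc))] at b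
        omega
    have e2 : (sturmParikh α n m).2 = (sturmParikh α n' m).2 := by
      have := hsum n; have := hsum n'; omega
    exact Prod.ext e1 e2
  · intro n n' _ _ hn hn'
    have a := hfst n
    have b := hfst n'
    rw [if_pos hn] at a
    rw [if_neg (not_le.mpr hn')] at b
    omega
end

section
/- Let α ∈ (0,1) be irrational and m, n, k positive integers with k ≥ 1. If the factors of the Sturmian word s_{α,0} starting at positions n, n+m, n+2m, …, n+km, each of length m, all have the same Parikh vector, then the k+1 points {nα}, {(n+m)α}, …, {(n+km)α} all lie on the same side of {-mα}: either all in [0, {-mα}) or all in [{-mα}, 1). -/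
open scoped Classical

namespace Int

variable {R : Type*} [CommRing R] [LinearOrder R] [IsStrictOrderedRing R] [FloorRing R]

theorem floor_add_sub_floor_eq_ceil_sub (x t : R) :
    ⌊x + t⌋ - ⌊x⌋ = ⌈t⌉ - if fract x < fract (-t) then 1 else 0 := by
  have hsplit : x + t = ((⌊x⌋ + ⌈t⌉ : ℤ) : R) + (fract x - fract (-t)) := by
    rw [fract, fract, floor_neg]
    push_cast
    ring
  have hx := fract_nonneg x
  have hx' := fract_lt_one x
  have ht := fract_nonneg (-t)
  have ht' := fract_lt_one (-t)
  rw [hsplit, floor_intCast_add]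
  split_ifs with hlt
  · have : ⌊fract x - fract (-t)⌋ = -1 := by
      rw [floor_eq_iff]; push_cast; constructor <;> linarith
    omega
  · have : ⌊fract x - fract (-t)⌋ = 0 := by
      rw [floor_eq_iff]; push_cast; constructor <;> linarith
    omega

theorem floor_add_sub_floor_eq_ite {a : R} (ha : a ∈ Set.Ioo (0 : R) 1) (x : R) :
    ⌊x + a⌋ - ⌊x⌋ = if 1 - a ≤ fract x then 1 else 0 := by
  have hceil : ⌈a⌉ = 1 := by
    rw [ceil_eq_iff]; norm_num; exact ⟨ha.1, ha.2.le⟩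
  have hfract : fract a = a := fract_eq_self.2 ⟨ha.1.le, ha.2⟩
  have hfract_neg : fract (-a) = 1 - a := by
    rw [fract_neg (by rw [hfract]; exact ha.1.ne'), hfract]
  rw [floor_add_sub_floor_eq_ceil_sub, hceil, hfract_neg]
  split_ifs <;> first | rfl | linarith

end Int

section Sturmian

variable {α : ℝ}

theorem sturmParikh_fst_eq_floor_sub_floor (hα : α ∈ Set.Ioo (0 : ℝ) 1) (p m : ℕ) :
    ((sturmParikh α p m).1 : ℤ) = ⌊((p + m : ℕ) : ℝ) * α⌋ - ⌊(p : ℝ) * α⌋ := by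
  have hletter : ∀ i ∈ Finset.range m,
      (if 1 - α ≤ Int.fract (((p + i : ℕ) : ℝ) * α) then (1 : ℤ) else 0) =
        ⌊((p + (i + 1) : ℕ) : ℝ) * α⌋ - ⌊((p + i : ℕ) : ℝ) * α⌋ := fun i _ => by
    rw [← Int.floor_add_sub_floor_eq_ite hα]
    push_cast
    ring_nf
  rw [sturmParikh, Finset.natCast_card_filter, Finset.sum_congr rfl hletter,
    Finset.sum_range_sub (fun i => ⌊((p + i : ℕ) : ℝ) * α⌋)]
  simp

theorem sturmParikh_fst_eq_ceil_sub (hα : α ∈ Set.Ioo (0 : ℝ) 1) (p m : ℕ) :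
    ((sturmParikh α p m).1 : ℤ) =
      ⌈(m : ℝ) * α⌉ - if Int.fract ((p : ℝ) * α) < Int.fract (-(m : ℝ) * α) then 1 else 0 := by
  rw [sturmParikh_fst_eq_floor_sub_floor hα, neg_mul, ← Int.floor_add_sub_floor_eq_ceil_sub,
    Nat.cast_add, add_mul]

theorem sturmParikh_fst_eq_ceil_sub_one_iff (hα : α ∈ Set.Ioo (0 : ℝ) 1) (p m : ℕ) :
    ((sturmParikh α p m).1 : ℤ) = ⌈(m : ℝ) * α⌉ - 1 ↔
      Int.fract ((p : ℝ) * α) < Int.fract (-(m : ℝ) * α) := by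
  rw [sturmParikh_fst_eq_ceil_sub hα]
  split_ifs with hside
  · simp only [hside]
  · simp only [hside, iff_false]
    omega

end Sturmian

theorem abelian_power_points_same_side_general
    (α : ℝ) (hα : α ∈ Set.Ioo (0 : ℝ) 1)
    (m n k : ℕ)
    (h : ∀ j ≤ k, sturmParikh α (n + j * m) m = sturmParikh α n m) :
    (∀ j ≤ k, Int.fract (((n + j * m : ℕ) : ℝ) * α) < Int.fract (-(m : ℝ) * α)) ∨
    (∀ j ≤ k, Int.fract (-(m : ℝ) * α) ≤ Int.fract (((n + j * m : ℕ) : ℝ) * α)) := by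
  have hside : ∀ j ≤ k, (Int.fract (((n + j * m : ℕ) : ℝ) * α) < Int.fract (-(m : ℝ) * α) ↔
      Int.fract ((n : ℝ) * α) < Int.fract (-(m : ℝ) * α)) := fun j hj => by
    rw [← sturmParikh_fst_eq_ceil_sub_one_iff hα, ← sturmParikh_fst_eq_ceil_sub_one_iff hα, h j hj]
  by_cases h0 : Int.fract ((n : ℝ) * α) < Int.fract (-(m : ℝ) * α)
  · exact Or.inl fun j hj => (hside j hj).2 h0
  · exact Or.inr fun j hj => not_lt.1 fun hj' => h0 ((hside j hj).1 hj')

/-- If the length-`m` factors of `s_{α,0}` starting at positions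
`n, n+m, …, n+km` all have the same Parikh vector, then the points
`{nα}, {(n+m)α}, …, {(n+km)α}` all lie on the same side of `{-mα}`. -/
theorem abelian_power_points_same_side
    (α : ℝ) (hα : α ∈ Set.Ioo (0 : ℝ) 1) (hirr : Irrational α)
    (m n k : ℕ) (hm : 0 < m) (hn : 0 < n) (hk : 1 ≤ k)
    (h : ∀ j ≤ k, sturmParikh α (n + j * m) m = sturmParikh α n m) :
    (∀ j ≤ k, Int.fract (((n + j * m : ℕ) : ℝ) * α) < Int.fract (-(m : ℝ) * α)) ∨
    (∀ j ≤ k, Int.fract (-(m : ℝ) * α) ≤ Int.fract (((n + j * m : ℕ) : ℝ) * α)) :=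
  abelian_power_points_same_side_general α hα m n k h
end

section
/- Let α ∈ (0,1) be irrational and m a positive integer with {mα} < 1/2. Then the Sturmian word s_{α,0} contains an abelian power of period m and exponent k ≥ 2 if and only if {mα} < 1/k. -/
/-! The Parikh vector of the length-`m` factor at position `n` only records whether `{nα}` lies
in `[1 - {mα}, 1)`, and consecutive blocks start at the points `{nα}, {nα} + {mα}, …` of the
orbit of the rotation by `{mα}`. Since `{mα} < 1/2`, a block starting in the upper interval is
followed by one starting below it, so the `k` blocks of an abelian power all start below
`1 - {mα}`, which forces `{nα} + k{mα} < 1`. Conversely, as `α` is irrational, `{nα}` is dense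
and some `n ≥ 1` has `{nα} < 1 - k{mα}`. -/

open scoped Classical

/-- The factor of `s_{α,0}` of length `k*m` starting at position `n` is an abelian power
of period `m` and exponent `k`: its `k` consecutive blocks of length `m` share the same
Parikh vector. -/
noncomputable def HasAbelianPowerAt (α : ℝ) (n m k : ℕ) : Prop :=
  ∀ j < k, sturmParikh α (n + j * m) m = sturmParikh α n m

/-- The Sturmian word `s_{α,0}` contains an abelian power of period `m` and exponent `k`. -/
noncomputable def HasAbelianPower (α : ℝ) (m k : ℕ) : Prop :=
  ∃ n : ℕ, 1 ≤ n ∧ HasAbelianPowerAt α n m k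

namespace Int

variable {R : Type*} [CommRing R] [LinearOrder R] [IsStrictOrderedRing R] [FloorRing R]

theorem floor_add_eq_ite (x y : R) :
    ⌊x + y⌋ = ⌊x⌋ + ⌊y⌋ + if 1 - fract y ≤ fract x then 1 else 0 := by
  have hxy : x + y = (fract x + fract y) + ((⌊x⌋ + ⌊y⌋ : ℤ) : R) := by
    push_cast
    linarith [floor_add_fract x, floor_add_fract y]
  rw [hxy, floor_add_intCast, add_comm]
  congr 1
  have := fract_nonneg x
  have := fract_nonneg y
  have := fract_lt_one x
  have := fract_lt_one y
  split_ifs <;> rw [floor_eq_iff] <;> push_cast <;> constructor <;> linarith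

theorem fract_add_of_one_sub_fract_le {x y : R} (h : 1 - fract y ≤ fract x) :
    fract (x + y) = fract x + fract y - 1 := by
  rw [fract_eq_iff]
  refine ⟨by linarith, by linarith [fract_lt_one x, fract_lt_one y], ⌊x⌋ + ⌊y⌋ + 1, ?_⟩
  push_cast
  linarith [floor_add_fract x, floor_add_fract y]

theorem fract_add_natCast_mul_of_lt_one {x y : R} {j : ℕ} (h : fract x + j * fract y < 1) :
    fract (x + j * y) = fract x + j * fract y := by
  rw [fract_eq_iff]
  refine ⟨by have := fract_nonneg y; positivity, h, ⌊x⌋ + j * ⌊y⌋, ?_⟩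
  push_cast
  linear_combination -floor_add_fract x - (j : R) * floor_add_fract y

theorem fract_add_natCast_mul_lt_one_of_forall_lt {x y : R} {k : ℕ}
    (h : ∀ j < k, fract (x + j * y) < 1 - fract y) : fract x + k * fract y < 1 := by
  induction k with
  | zero => simpa using fract_lt_one x
  | succ k ih =>
    have hk := ih fun j hj => h j (by omega)
    have := h k (by omega)
    rw [fract_add_natCast_mul_of_lt_one hk] at this
    push_cast
    linarith

end Int

namespace Irrational

theorem exists_pos_nat_fract_mul_lt {α : ℝ} (h : Irrational α) {ε : ℝ} (hε : 0 < ε) :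
    ∃ n : ℕ, 0 < n ∧ Int.fract (n * α) < ε := by
  have hdense : DenseRange fun n : ℕ => n • (α : AddCircle (1 : ℝ)) :=
    denseRange_zsmul_iff_nsmul.1 (AddCircle.denseRange_zsmul_coe_iff.2 (by simpa using h))
  obtain ⟨n, y, hy, hny⟩ := hdense.exists_mem_open
    (QuotientAddGroup.isOpenMap_coe _ isOpen_Ioo)
    ⟨_, ⟨min ε 1 / 2, ⟨by positivity, half_lt_self (by positivity)⟩, rfl⟩⟩
  have hyε : y < ε := hy.2.trans_le (min_le_left _ _)
  have hfract : Int.fract (n * α) = y := by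
    rw [← AddCircle.coe_eq_coe_iff_of_mem_Ico (p := 1) (a := 0)
      ⟨Int.fract_nonneg _, by simpa using Int.fract_lt_one _⟩
      ⟨hy.1.le, by simpa using hy.2.trans_le (min_le_right _ _)⟩,
      AddCircle.coe_fract, hny, ← AddCircle.coe_nsmul, nsmul_eq_mul]
  refine ⟨n, Nat.pos_of_ne_zero ?_, hfract ▸ hyε⟩
  rintro rfl
  simp only [Nat.cast_zero, zero_mul, Int.fract_zero] at hfract
  exact hy.1.ne hfract

end Irrational

theorem sturmParikh_fst_add_snd (α : ℝ) (n m : ℕ) :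
    (sturmParikh α n m).1 + (sturmParikh α n m).2 = m := by
  simpa only [sturmParikh, not_le, Finset.card_range] using
    Finset.card_filter_add_card_filter_not (s := Finset.range m)
      fun i => 1 - α ≤ Int.fract (((n + i : ℕ) : ℝ) * α)

/-- The letter at position `p` is `a` exactly when `⌊pα⌋` jumps between `p` and `p + 1`, so
the number of `a`'s in a factor telescopes. -/
theorem sturmParikh_fst {α : ℝ} (hα : α ∈ Set.Ico 0 1) (n m : ℕ) :
    ((sturmParikh α n m).1 : ℤ) = ⌊(m : ℝ) * α⌋ +
      if 1 - Int.fract ((m : ℝ) * α) ≤ Int.fract ((n : ℝ) * α) then 1 else 0 := by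
  have hfloor : ⌊α⌋ = 0 := Int.floor_eq_zero_iff.2 hα
  have hfract : Int.fract α = α := Int.fract_eq_self.2 hα
  have hletter : ∀ p : ℕ, (if 1 - α ≤ Int.fract ((p : ℝ) * α) then (1 : ℤ) else 0) =
      ⌊((p + 1 : ℕ) : ℝ) * α⌋ - ⌊(p : ℝ) * α⌋ := fun p => by
    rw [show ((p + 1 : ℕ) : ℝ) * α = p * α + α by push_cast; ring, Int.floor_add_eq_ite,
      hfloor, hfract]
    ring
  have hcount :
      ((sturmParikh α n m).1 : ℤ) = ⌊((n + m : ℕ) : ℝ) * α⌋ - ⌊(n : ℝ) * α⌋ := by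
    rw [sturmParikh, Finset.card_filter, Nat.cast_sum]
    simp only [Nat.cast_ite, Nat.cast_one, Nat.cast_zero]
    have := Finset.sum_range_sub (fun i => ⌊((n + i : ℕ) : ℝ) * α⌋) m
    simp only [Nat.add_zero, ← Nat.add_assoc] at this
    rw [← this]
    exact Finset.sum_congr rfl fun i _ => hletter (n + i)
  rw [hcount, show ((n + m : ℕ) : ℝ) * α = n * α + m * α by push_cast; ring,
    Int.floor_add_eq_ite]
  ring

theorem sturmParikh_eq_iff {α : ℝ} (hα : α ∈ Set.Ico 0 1) (n n' m : ℕ) :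
    sturmParikh α n m = sturmParikh α n' m ↔
      (1 - Int.fract ((m : ℝ) * α) ≤ Int.fract ((n : ℝ) * α) ↔
        1 - Int.fract ((m : ℝ) * α) ≤ Int.fract ((n' : ℝ) * α)) := by
  have hn := sturmParikh_fst hα n m
  have hn' := sturmParikh_fst hα n' m
  constructor
  · intro h
    rw [h, hn'] at hn
    split_ifs at hn <;> first | tauto | omega
  · intro h
    have hfst : (sturmParikh α n m).1 = (sturmParikh α n' m).1 := by
      rw [if_congr h rfl rfl, ← hn'] at hn
      exact_mod_cast hn
    have := sturmParikh_fst_add_snd α n m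
    have := sturmParikh_fst_add_snd α n' m
    exact Prod.ext hfst (by omega)

section AbelianPower

variable {α : ℝ} {n m k : ℕ}

theorem hasAbelianPowerAt_iff (hα : α ∈ Set.Ico 0 1) :
    HasAbelianPowerAt α n m k ↔ ∀ j < k,
      (1 - Int.fract ((m : ℝ) * α) ≤ Int.fract (n * α + j * (m * α)) ↔
        1 - Int.fract ((m : ℝ) * α) ≤ Int.fract ((n : ℝ) * α)) := by
  refine forall₂_congr fun j _ => ?_
  rw [sturmParikh_eq_iff hα, show ((n + j * m : ℕ) : ℝ) * α = n * α + j * (m * α) by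
    push_cast; ring]

theorem hasAbelianPowerAt_of_fract_add_lt_one (hα : α ∈ Set.Ico 0 1)
    (h : Int.fract ((n : ℝ) * α) + k * Int.fract ((m : ℝ) * α) < 1) :
    HasAbelianPowerAt α n m k := by
  rw [hasAbelianPowerAt_iff hα]
  intro j hj
  have hjk : (j : ℝ) + 1 ≤ k := by exact_mod_cast hj
  have hβ := Int.fract_nonneg ((m : ℝ) * α)
  have hj0 : (0 : ℝ) ≤ j * Int.fract ((m : ℝ) * α) := by positivity
  have hlow : Int.fract ((n : ℝ) * α) + j * Int.fract ((m : ℝ) * α) <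
      1 - Int.fract ((m : ℝ) * α) := by
    nlinarith
  rw [Int.fract_add_natCast_mul_of_lt_one (by linarith)]
  exact iff_of_false (not_le.2 hlow) (not_le.2 (by linarith))

theorem fract_add_lt_one_of_hasAbelianPowerAt (hα : α ∈ Set.Ico 0 1)
    (hhalf : Int.fract ((m : ℝ) * α) < 1 / 2) (hk : 2 ≤ k) (h : HasAbelianPowerAt α n m k) :
    Int.fract ((n : ℝ) * α) + k * Int.fract ((m : ℝ) * α) < 1 := by
  rw [hasAbelianPowerAt_iff hα] at h
  by_cases hup : 1 - Int.fract ((m : ℝ) * α) ≤ Int.fract ((n : ℝ) * α)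
  · -- a block starting in the upper region `[1 - {mα}, 1)` is followed by one below `{mα} < 1/2`
    have hnext := (h 1 (by omega)).2 hup
    rw [Nat.cast_one, one_mul, Int.fract_add_of_one_sub_fract_le hup] at hnext
    linarith [Int.fract_lt_one ((n : ℝ) * α)]
  · refine Int.fract_add_natCast_mul_lt_one_of_forall_lt fun j hj => ?_
    exact not_le.1 fun hj' => hup ((h j hj).1 hj')

end AbelianPower

theorem hasAbelianPower_iff_of_fract_lt_half_general
    (α : ℝ) (hα : α ∈ Set.Ioo (0 : ℝ) 1) (hirr : Irrational α)
    (m : ℕ) (hhalf : Int.fract ((m : ℝ) * α) < 1 / 2)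
    (k : ℕ) (hk : 2 ≤ k) :
    HasAbelianPower α m k ↔ Int.fract ((m : ℝ) * α) < 1 / (k : ℝ) := by
  have hα' : α ∈ Set.Ico 0 1 := Set.Ioo_subset_Ico_self hα
  have hk0 : (0 : ℝ) < k := by exact_mod_cast (by omega : 0 < k)
  rw [lt_div_iff₀ hk0, mul_comm]
  constructor
  · rintro ⟨n, -, hn⟩
    linarith [fract_add_lt_one_of_hasAbelianPowerAt hα' hhalf hk hn,
      Int.fract_nonneg ((n : ℝ) * α)]
  · intro h
    obtain ⟨n, hn, hfract⟩ := hirr.exists_pos_nat_fract_mul_lt (sub_pos.2 h)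
    exact ⟨n, hn, hasAbelianPowerAt_of_fract_add_lt_one hα' (by linarith)⟩

/-- For irrational `α ∈ (0,1)` and `m ≥ 1` with `{mα} < 1/2`, the word
`s_{α,0}` contains an abelian power of period `m` and exponent `k ≥ 2` iff `{mα} < 1/k`. -/
theorem hasAbelianPower_iff_of_fract_lt_half
    (α : ℝ) (hα : α ∈ Set.Ioo (0 : ℝ) 1) (hirr : Irrational α)
    (m : ℕ) (hm : 0 < m) (hhalf : Int.fract ((m : ℝ) * α) < 1 / 2)
    (k : ℕ) (hk : 2 ≤ k) :
    HasAbelianPower α m k ↔ Int.fract ((m : ℝ) * α) < 1 / (k : ℝ) :=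
  hasAbelianPower_iff_of_fract_lt_half_general α hα hirr m hhalf k hk
end

section
/- Let α ∈ (0,1) be irrational, m a positive integer with {mα} < 1/2, and k ≥ 2. If {mα} < 1/(k+1), then the Sturmian word s_{α,0} contains an abelian power of period m and exponent k starting at position m (i.e., the factor a_m a_{m+1} ⋯ a_{m+km-1} is an abelian power of period m and exponent k). -/
open scoped Classical

/-- Telescoping: the `a`-count of the length-`m` block at `n` is `⌊(n+m)α⌋ - ⌊nα⌋`. -/
lemma sturm_countA (α : ℝ) (h0 : 0 < α) (h1 : α < 1) (n m : ℕ) :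
    ((((Finset.range m).filter fun i => 1 - α ≤ Int.fract (((n + i : ℕ) : ℝ) * α)).card : ℤ))
      = ⌊((n + m : ℕ) : ℝ) * α⌋ - ⌊((n : ℕ) : ℝ) * α⌋ := by
  have key : ∀ p : ℕ, (⌊((p + 1 : ℕ) : ℝ) * α⌋ : ℤ) - ⌊((p : ℕ) : ℝ) * α⌋
      = if 1 - α ≤ Int.fract (((p : ℕ) : ℝ) * α) then 1 else 0 := by
    intro p
    set x : ℝ := ((p : ℕ) : ℝ) * α with hx
    have hx1 : ((p + 1 : ℕ) : ℝ) * α = (⌊x⌋ : ℝ) + (Int.fract x + α) := by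
      have := Int.floor_add_fract x
      push_cast
      linarith
    rw [hx1, Int.floor_intCast_add]
    have hf0 : 0 ≤ Int.fract x := Int.fract_nonneg x
    have hf1 : Int.fract x < 1 := Int.fract_lt_one x
    by_cases hc : 1 - α ≤ Int.fract x
    · rw [if_pos hc]
      have : ⌊Int.fract x + α⌋ = 1 := by
        rw [Int.floor_eq_iff]
        constructor <;> push_cast <;> linarith
      omega
    · rw [if_neg hc]
      push_neg at hc
      have : ⌊Int.fract x + α⌋ = 0 := by
        rw [Int.floor_eq_iff]
        constructor <;> push_cast <;> linarith
      omega
  rw [Finset.card_filter, Nat.cast_sum]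
  simp only [Nat.cast_ite, Nat.cast_one, Nat.cast_zero]
  rw [show (∑ i ∈ Finset.range m, if 1 - α ≤ Int.fract (((n + i : ℕ) : ℝ) * α) then (1:ℤ) else 0)
      = ∑ i ∈ Finset.range m,
        ((⌊((n + (i+1) : ℕ) : ℝ) * α⌋ : ℤ) - ⌊((n + i : ℕ) : ℝ) * α⌋) from
    Finset.sum_congr rfl fun i _ => by
      rw [show n + (i + 1) = (n + i) + 1 from by ring, key (n + i)]]
  rw [Finset.sum_range_sub (fun i => (⌊((n + i : ℕ) : ℝ) * α⌋ : ℤ))]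
  simp

/-- For irrational `α ∈ (0,1)`, `m ≥ 1` with `{mα} < 1/2` and `k ≥ 2`:
if `{mα} < 1/(k+1)` then `s_{α,0}` contains an abelian power of period `m` and exponent
`k` starting at position `m`. -/
theorem hasAbelianPowerAt_m_of_fract_lt
    (α : ℝ) (hα : α ∈ Set.Ioo (0 : ℝ) 1) (hirr : Irrational α)
    (m : ℕ) (hm : 0 < m) (hhalf : Int.fract ((m : ℝ) * α) < 1 / 2)
    (k : ℕ) (hk : 2 ≤ k)
    (h : Int.fract ((m : ℝ) * α) < 1 / ((k : ℝ) + 1)) :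
    HasAbelianPowerAt α m m k := by
  obtain ⟨h0, h1⟩ := hα
  set f := Int.fract ((m : ℝ) * α) with hf
  have hkpos : (0 : ℝ) < (k : ℝ) + 1 := by positivity
  have hfloor : ∀ t : ℕ, t ≤ k + 1 → ⌊((t * m : ℕ) : ℝ) * α⌋ = t * ⌊(m : ℝ) * α⌋ := by
    intro t ht
    have hx : ((t * m : ℕ) : ℝ) * α = ((t * ⌊(m : ℝ) * α⌋ : ℤ) : ℝ) + (t : ℝ) * f := by
      have := Int.floor_add_fract ((m : ℝ) * α)
      push_cast
      nlinarith [this]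
    rw [hx, Int.floor_intCast_add]
    have h0f : 0 ≤ f := Int.fract_nonneg _
    have htf : (t : ℝ) * f < 1 := by
      have h1t : (t : ℝ) ≤ (k : ℝ) + 1 := by exact_mod_cast ht
      have : (t : ℝ) * f ≤ ((k : ℝ) + 1) * f := by nlinarith
      have h2 : ((k : ℝ) + 1) * f < 1 := by
        have := (lt_div_iff₀ hkpos).mp h
        nlinarith
      linarith
    have : ⌊(t : ℝ) * f⌋ = 0 := by
      rw [Int.floor_eq_iff]
      constructor <;> simp <;> [positivity; exact htf]
    omega
  -- count of a's in block starting at n, length m, depends only on ⌊(n+m)α⌋-⌊nα⌋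
  intro j hj
  have hA : ∀ n : ℕ,
      (((Finset.range m).filter fun i => 1 - α ≤ Int.fract (((n + i : ℕ) : ℝ) * α)).card : ℤ)
        = ⌊((n + m : ℕ) : ℝ) * α⌋ - ⌊((n : ℕ) : ℝ) * α⌋ := fun n => sturm_countA α h0 h1 n m
  have hAeq : (((Finset.range m).filter fun i =>
        1 - α ≤ Int.fract ((((m + j * m) + i : ℕ) : ℝ) * α)).card : ℤ)
      = (((Finset.range m).filter fun i =>
        1 - α ≤ Int.fract (((m + i : ℕ) : ℝ) * α)).card : ℤ) := by
    have e1 : ⌊(((m + j * m) + m : ℕ) : ℝ) * α⌋ = (j + 2) * ⌊(m : ℝ) * α⌋ := by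
      rw [show (m + j * m) + m = (j + 2) * m from by ring]; exact hfloor (j + 2) (by omega)
    have e2 : ⌊((m + j * m : ℕ) : ℝ) * α⌋ = (j + 1) * ⌊(m : ℝ) * α⌋ := by
      rw [show m + j * m = (j + 1) * m from by ring]; exact hfloor (j + 1) (by omega)
    have e3 : ⌊((m + m : ℕ) : ℝ) * α⌋ = 2 * ⌊(m : ℝ) * α⌋ := by
      rw [show m + m = 2 * m from by ring]; exact hfloor 2 (by omega)
    rw [hA (m + j * m), hA m, e1, e2, e3]
    ring
  have hAnat : (((Finset.range m).filter fun i =>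
        1 - α ≤ Int.fract ((((m + j * m) + i : ℕ) : ℝ) * α)).card)
      = (((Finset.range m).filter fun i =>
        1 - α ≤ Int.fract (((m + i : ℕ) : ℝ) * α)).card) := by exact_mod_cast hAeq
  have hcompl : ∀ n : ℕ,
      ((Finset.range m).filter fun i => 1 - α ≤ Int.fract (((n + i : ℕ) : ℝ) * α)).card
      + ((Finset.range m).filter fun i => Int.fract (((n + i : ℕ) : ℝ) * α) < 1 - α).card
      = m := by
    intro n
    have hsplit := Finset.card_filter_add_card_filter_not
      (s := Finset.range m) (p := fun i => 1 - α ≤ Int.fract (((n + i : ℕ) : ℝ) * α))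
    rw [Finset.card_range] at hsplit
    have heq : (Finset.range m).filter (fun i => Int.fract (((n + i : ℕ) : ℝ) * α) < 1 - α)
        = (Finset.range m).filter
            (fun i => ¬ (1 - α ≤ Int.fract (((n + i : ℕ) : ℝ) * α))) :=
      Finset.filter_congr (fun i _ => not_le.symm)
    rw [heq]
    exact hsplit
  have h1c := hcompl (m + j * m)
  have h2c := hcompl m
  unfold sturmParikh
  ext <;> simp only [Prod.fst, Prod.snd]
  · exact hAnat
  · omega
end

section
/- Let α ∈ (0,1) be irrational, m a positive integer with {mα} < 1/2, and suppose the Sturmian word s_{α,0} contains an abelian power of period m and exponent k ≥ 2 starting at a position i with {iα} ≥ {mα}. Then {mα} < 1/(k+1). -/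
open scoped Classical

lemma ite_eq_floor_succ (α : ℝ) (h0 : 0 < α) (h1 : α < 1) (p : ℕ) :
    (if 1 - α ≤ Int.fract ((p:ℝ)*α) then (1:ℤ) else 0)
      = ⌊((p+1:ℕ):ℝ)*α⌋ - ⌊(p:ℝ)*α⌋ := by
  have hrew : ((p+1:ℕ):ℝ)*α = (⌊(p:ℝ)*α⌋ : ℤ) + (Int.fract ((p:ℝ)*α) + α) := by
    have := Int.floor_add_fract ((p:ℝ)*α)
    push_cast
    linarith
  rw [hrew, Int.floor_intCast_add]
  have hnn := Int.fract_nonneg ((p:ℝ)*α)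
  have hlt := Int.fract_lt_one ((p:ℝ)*α)
  split_ifs with hc
  · have : ⌊Int.fract ((p:ℝ)*α) + α⌋ = 1 := by
      rw [Int.floor_eq_iff] <;> constructor <;> push_cast <;> linarith
    omega
  · have : ⌊Int.fract ((p:ℝ)*α) + α⌋ = 0 := by
      rw [Int.floor_eq_iff] <;> constructor <;> push_cast <;> linarith
    omega

lemma count_eq (α : ℝ) (h0 : 0 < α) (h1 : α < 1) (n m : ℕ) :
    ((((Finset.range m).filter fun l => 1 - α ≤ Int.fract (((n + l : ℕ) : ℝ) * α)).card : ℤ))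
      = ⌊((n+m:ℕ):ℝ)*α⌋ - ⌊((n:ℕ):ℝ)*α⌋ := by
  have h2 : ((((Finset.range m).filter fun l => 1 - α ≤ Int.fract (((n + l : ℕ) : ℝ) * α)).card : ℤ))
      = ∑ l ∈ Finset.range m,
          ((fun j => ⌊((n+j:ℕ):ℝ)*α⌋) (l+1) - (fun j => ⌊((n+j:ℕ):ℝ)*α⌋) l) := by
    rw [Finset.card_filter, Nat.cast_sum]
    refine Finset.sum_congr rfl fun l _ => ?_
    have := ite_eq_floor_succ α h0 h1 (n + l)
    show _ = ⌊((n + (l+1) :ℕ):ℝ) * α⌋ - ⌊((n + l :ℕ):ℝ) * α⌋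
    rw [show n + (l+1) = n + l + 1 from rfl, ← this]
    split_ifs <;> simp
  rw [h2, Finset.sum_range_sub (fun j => ⌊((n+j:ℕ):ℝ)*α⌋) m]
  simp

lemma diff_eq (α : ℝ) (n m : ℕ) :
    ⌊((n+m:ℕ):ℝ)*α⌋ - ⌊((n:ℕ):ℝ)*α⌋
      = ⌊(m:ℝ)*α⌋ + ⌊Int.fract ((n:ℝ)*α) + Int.fract ((m:ℝ)*α)⌋ := by
  have hrew : ((n+m:ℕ):ℝ)*α
      = ((⌊(n:ℝ)*α⌋ + ⌊(m:ℝ)*α⌋ : ℤ) : ℝ) + (Int.fract ((n:ℝ)*α) + Int.fract ((m:ℝ)*α)) := by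
    have h1 := Int.floor_add_fract ((n:ℝ)*α)
    have h2 := Int.floor_add_fract ((m:ℝ)*α)
    push_cast
    linarith
  rw [hrew, Int.floor_intCast_add]
  omega

lemma fract_add_fract (a b : ℝ) : Int.fract (a + b) = Int.fract (Int.fract a + Int.fract b) := by
  have hrew : a + b = (Int.fract a + Int.fract b) + ((⌊a⌋ + ⌊b⌋ : ℤ) : ℝ) := by
    have h1 := Int.floor_add_fract a
    have h2 := Int.floor_add_fract b
    push_cast
    linarith
  rw [hrew, Int.fract_add_intCast]

/-- For irrational `α ∈ (0,1)`, `m ≥ 1` with `{mα} < 1/2`: if `s_{α,0}`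
contains an abelian power of period `m` and exponent `k ≥ 2` starting at a position `i`
with `{iα} ≥ {mα}`, then `{mα} < 1/(k+1)`. -/
theorem fract_lt_of_hasAbelianPowerAt
    (α : ℝ) (hα : α ∈ Set.Ioo (0 : ℝ) 1) (hirr : Irrational α)
    (m : ℕ) (hm : 0 < m) (hhalf : Int.fract ((m : ℝ) * α) < 1 / 2)
    (k : ℕ) (hk : 2 ≤ k) (i : ℕ) (hi : 1 ≤ i)
    (hfr : Int.fract ((m : ℝ) * α) ≤ Int.fract ((i : ℝ) * α))
    (h : HasAbelianPowerAt α i m k) :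
    Int.fract ((m : ℝ) * α) < 1 / ((k : ℝ) + 1) := by
  obtain ⟨h0, h1⟩ := hα
  set β := Int.fract ((m : ℝ) * α) with hβ
  have hb0 : 0 ≤ β := Int.fract_nonneg _
  have hb1 : β < 1 := Int.fract_lt_one _
  set x : ℕ → ℝ := fun j => Int.fract (((i + j*m : ℕ) : ℝ) * α) with hx
  have hx0nn : 0 ≤ x 0 := Int.fract_nonneg _
  have hx0lt : x 0 < 1 := Int.fract_lt_one _
  -- the combinatorial condition, in floor form
  have key : ∀ j < k, ⌊x j + β⌋ = ⌊x 0 + β⌋ := by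
    intro j hj
    have := congrArg Prod.fst (h j hj)
    simp only [sturmParikh] at this
    have hZ : ((((Finset.range m).filter fun l =>
        1 - α ≤ Int.fract (((i + j*m + l : ℕ) : ℝ) * α)).card : ℤ))
        = ((((Finset.range m).filter fun l =>
        1 - α ≤ Int.fract (((i + l : ℕ) : ℝ) * α)).card : ℤ)) := by exact_mod_cast this
    rw [count_eq α h0 h1 (i + j*m) m, count_eq α h0 h1 i m,
      diff_eq α (i + j*m) m, diff_eq α i m] at hZ
    have hx0 : x 0 = Int.fract ((i:ℝ)*α) := by simp [hx]
    have hxj : x j = Int.fract (((i + j*m : ℕ):ℝ)*α) := rfl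
    rw [hx0, hxj, hβ]
    omega
  -- the step relation
  have hrel : ∀ j : ℕ, x (j+1) = Int.fract (x j + β) := by
    intro j
    have hre : ((i + (j+1)*m : ℕ) : ℝ) * α = ((i + j*m : ℕ) : ℝ) * α + (m:ℝ)*α := by
      push_cast; ring
    rw [hx]
    simp only
    rw [hre, fract_add_fract, ← hβ]
  -- x 0 + β < 1
  have hfl0 : ⌊x 0 + β⌋ = 0 := by
    by_contra hne
    have hnn : (0:ℤ) ≤ ⌊x 0 + β⌋ := Int.floor_nonneg.2 (by linarith)
    have hlt2 : ⌊x 0 + β⌋ < 2 := by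
      rw [Int.floor_lt]
      push_cast
      linarith
    have h1' : ⌊x 0 + β⌋ = 1 := by omega
    have hge1 : (1:ℝ) ≤ x 0 + β := by
      have := Int.floor_le (x 0 + β); rw [h1'] at this; exact_mod_cast this
    have hx1 : x 1 = x 0 + β - 1 := by
      have e1 : Int.fract (x 0 + β) = Int.fract (x 0 + β - 1) := by
        rw [show x 0 + β - 1 = x 0 + β + ((-1:ℤ):ℝ) by push_cast; ring, Int.fract_add_intCast]
      rw [hrel 0, e1]
      exact Int.fract_eq_self.2 ⟨by linarith, by linarith⟩
    have hfl1 : ⌊x 1 + β⌋ = 0 := by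
      apply Int.floor_eq_zero_iff.2
      rw [hx1]
      constructor
      · linarith
      · linarith
    have := key 1 (by omega)
    rw [hfl1, h1'] at this
    exact absurd this (by norm_num)
  -- hence all partial sums stay below 1
  have hlt1 : ∀ j < k, x j + β < 1 := by
    intro j hj
    have := key j hj
    rw [hfl0] at this
    exact (Int.floor_eq_zero_iff.1 this).2
  -- linear growth
  have hlin : ∀ j, j < k → x j = x 0 + j * β := by
    intro j
    induction j with
    | zero => intro _; simp
    | succ n ih =>
      intro hjk
      have hn : n < k := by omega
      have hxn := ih hn
      have hnn : 0 ≤ x n + β := add_nonneg (Int.fract_nonneg _) hb0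
      rw [hrel n, Int.fract_eq_self.2 ⟨hnn, hlt1 n hn⟩, hxn]
      push_cast; ring
  -- conclude
  have hkm1 : k - 1 < k := by omega
  have hfin := hlt1 (k-1) hkm1
  rw [hlin (k-1) hkm1] at hfin
  have hcast : ((k-1 : ℕ) : ℝ) = (k:ℝ) - 1 := by
    have : (1:ℕ) ≤ k := by omega
    push_cast [this]; ring
  rw [hcast] at hfin
  have hx0ge : β ≤ x 0 := by simpa [hx] using hfr
  have hkpos : (0:ℝ) < (k:ℝ) + 1 := by positivity
  rw [lt_div_iff₀ hkpos]
  nlinarith [hfin, hx0ge]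
end

section
/- For every irrational real number α there exist infinitely many pairs of integers (n, m) with m > 0 such that |n/m - α| < 1/(√5 m²). -/
/-!
Let `p/q` run through the convergents of `α` and let `αₖ` be its complete quotients. The
convergent `pₖ/qₖ` has error exactly `1 / (qₖ Dₖ)` with `Dₖ = αₖ₊₁ qₖ + qₖ₋₁`, so it satisfies
Hurwitz's inequality iff `√5 qₖ < Dₖ`. If this fails at two consecutive indices, then
`t = qₖ₊₁/qₖ` and `y = αₖ₊₂` satisfy `t + 1/y ≤ √5` and `y + 1/t ≤ √5`, which forces
`t + 1/t ≤ √5`, i.e. `t ≤ φ`, and `t < φ` because `t` is rational. Failure at three consecutive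
indices would then make two consecutive ratios smaller than `φ`, whereas
`qₖ₊₂/qₖ₊₁ ≥ 1 + qₖ/qₖ₊₁ > 1 + 1/φ = φ`.
-/

open scoped goldenRatio

namespace Hurwitz

noncomputable def completeQuot (α : ℝ) : ℕ → ℝ
  | 0 => α
  | n + 1 => (Int.fract (completeQuot α n))⁻¹

/-- Indices are shifted by one: `convNum α (n + 1) / convDen α (n + 1)` is the `n`-th convergent
and index `0` holds the conventional `p₋₁ = 1`, `q₋₁ = 0`. -/
noncomputable def convNum (α : ℝ) : ℕ → ℤ
  | 0 => 1
  | 1 => ⌊α⌋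
  | n + 2 => ⌊completeQuot α (n + 1)⌋₊ * convNum α (n + 1) + convNum α n

noncomputable def convDen (α : ℝ) : ℕ → ℕ
  | 0 => 0
  | 1 => 1
  | n + 2 => ⌊completeQuot α (n + 1)⌋₊ * convDen α (n + 1) + convDen α n

noncomputable def errorDen (α : ℝ) (n : ℕ) : ℝ :=
  completeQuot α (n + 1) * convDen α (n + 1) + convDen α n

theorem le_goldenRatio_of_add_inv_le_sqrt_five {t y : ℝ} (ht : 0 < t) (hy : 0 < y)
    (h₁ : t + y⁻¹ ≤ √5) (h₂ : y + t⁻¹ ≤ √5) : t ≤ φ := by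
  have hs : √5 ^ 2 = 5 := Real.sq_sqrt (by norm_num)
  have hprod : y⁻¹ * y ≤ (√5 - t) * (√5 - t⁻¹) :=
    mul_le_mul (by linarith) (by linarith) hy.le (by linarith [inv_pos.2 hy])
  rw [inv_mul_cancel₀ hy.ne'] at hprod
  have htt : t * t⁻¹ = 1 := mul_inv_cancel₀ ht.ne'
  have hsum : t + t⁻¹ ≤ √5 :=
    le_of_mul_le_mul_left (by nlinarith) (Real.sqrt_pos.2 (by norm_num : (0 : ℝ) < 5))
  -- `φ` and `φ - 1` are the roots of `t² - √5 t + 1`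
  have hquad : (t - φ) * (t - (φ - 1)) ≤ 0 := by
    have hroots : (t - φ) * (t - (φ - 1)) = t * (t + t⁻¹ - √5) := by
      linear_combination (1 / 4 : ℝ) * hs - htt
    rw [hroots]
    exact mul_nonpos_of_nonneg_of_nonpos ht.le (by linarith)
  by_contra! hlt
  nlinarith [Real.one_lt_goldenRatio]

section General

variable (α : ℝ) (n : ℕ)

theorem completeQuot_eq_floor_add_inv :
    completeQuot α n = ⌊completeQuot α n⌋ + (completeQuot α (n + 1))⁻¹ := by
  rw [completeQuot, inv_inv, Int.floor_add_fract]

theorem completeQuot_succ_eq_natFloor_add_inv :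
    completeQuot α (n + 1) = ⌊completeQuot α (n + 1)⌋₊ + (completeQuot α (n + 2))⁻¹ := by
  rw [natCast_floor_eq_intCast_floor (inv_nonneg.2 (Int.fract_nonneg _))]
  exact completeQuot_eq_floor_add_inv α (n + 1)

theorem determinant :
    convNum α (n + 1) * convDen α n - convNum α n * convDen α (n + 1) = (-1) ^ (n + 1) := by
  induction n with
  | zero => simp [convNum, convDen]
  | succ n ih =>
    simp only [convNum, convDen, Nat.cast_add, Nat.cast_mul]
    linear_combination -ih

theorem errorDen_eq :
    errorDen α n = convDen α (n + 2) + convDen α (n + 1) * (completeQuot α (n + 2))⁻¹ := by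
  simp only [errorDen, convDen, Nat.cast_add, Nat.cast_mul]
  linear_combination (convDen α (n + 1) : ℝ) * completeQuot_succ_eq_natFloor_add_inv α n

end General

section Irrational

variable {α : ℝ} (hα : Irrational α)
include hα

theorem irrational_completeQuot : ∀ n, Irrational (completeQuot α n)
  | 0 => hα
  | n + 1 => ((irrational_completeQuot n).sub_intCast _).inv

theorem one_lt_completeQuot_succ (n : ℕ) : 1 < completeQuot α (n + 1) := by
  have hfract : Int.fract (completeQuot α n) ≠ 0 :=
    Int.fract_ne_zero_iff.2 fun ⟨m, hm⟩ => (irrational_completeQuot hα n).ne_int m hm.symm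
  exact (one_lt_inv₀ ((Int.fract_nonneg _).lt_of_ne' hfract)).2 (Int.fract_lt_one _)

theorem completeQuot_succ_pos (n : ℕ) : 0 < completeQuot α (n + 1) :=
  zero_lt_one.trans (one_lt_completeQuot_succ hα n)

theorem one_le_natFloor_completeQuot_succ (n : ℕ) : 1 ≤ ⌊completeQuot α (n + 1)⌋₊ :=
  Nat.le_floor (by exact_mod_cast (one_lt_completeQuot_succ hα n).le)

theorem convDen_succ_pos : ∀ n, 0 < convDen α (n + 1)
  | 0 => one_pos
  | n + 1 => Nat.add_pos_left
      (Nat.mul_pos (one_le_natFloor_completeQuot_succ hα n) (convDen_succ_pos n)) _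

theorem convDen_add_le (n : ℕ) : convDen α (n + 1) + convDen α n ≤ convDen α (n + 2) :=
  Nat.add_le_add_right
    (Nat.le_mul_of_pos_left _ (one_le_natFloor_completeQuot_succ hα n)) _

theorem cast_convDen_succ_pos (n : ℕ) : (0 : ℝ) < convDen α (n + 1) :=
  Nat.cast_pos.2 (convDen_succ_pos hα n)

theorem le_convDen_succ : ∀ n, n ≤ convDen α (n + 1)
  | 0 => Nat.zero_le _
  | 1 => by have := convDen_add_le hα 0; simp_all [convDen]
  | n + 2 => by
    show n + 2 ≤ convDen α (n + 3)
    have h₁ : n + 1 ≤ convDen α (n + 2) := le_convDen_succ (n + 1)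
    have h₂ : 0 < convDen α (n + 1) := convDen_succ_pos hα n
    have h₃ : convDen α (n + 2) + convDen α (n + 1) ≤ convDen α (n + 3) := convDen_add_le hα (n + 1)
    omega

theorem mul_errorDen (n : ℕ) :
    α * errorDen α n = completeQuot α (n + 1) * convNum α (n + 1) + convNum α n := by
  induction n with
  | zero =>
    have hinv := mul_inv_cancel₀ (completeQuot_succ_pos hα 0).ne'
    have hα₀ : α = ⌊α⌋ + (completeQuot α 1)⁻¹ := completeQuot_eq_floor_add_inv α 0
    simp only [errorDen, convNum, convDen, Nat.cast_zero, Nat.cast_one, Int.cast_one]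
    linear_combination completeQuot α 1 * hα₀ + hinv
  | succ n ih =>
    have hinv := mul_inv_cancel₀ (completeQuot_succ_pos hα (n + 1)).ne'
    have hξ := completeQuot_succ_eq_natFloor_add_inv α n
    rw [errorDen_eq] at ih
    rw [errorDen, convNum]
    push_cast
    linear_combination completeQuot α (n + 2) * ih
      + completeQuot α (n + 2) * convNum α (n + 1) * hξ
      + (convNum α (n + 1) - α * convDen α (n + 1)) * hinv

theorem errorDen_pos (n : ℕ) : 0 < errorDen α n :=
  add_pos_of_pos_of_nonneg
    (mul_pos (completeQuot_succ_pos hα n) (cast_convDen_succ_pos hα n)) (Nat.cast_nonneg _)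

theorem abs_convNum_div_convDen_sub (n : ℕ) :
    |(convNum α (n + 1) : ℝ) / convDen α (n + 1) - α| =
      1 / (convDen α (n + 1) * errorDen α n) := by
  have hQ : (0 : ℝ) < convDen α (n + 1) := cast_convDen_succ_pos hα n
  have hD := errorDen_pos hα n
  have hdet : (convNum α (n + 1) * convDen α n - convNum α n * convDen α (n + 1) : ℝ) =
      (-1) ^ (n + 1) := by
    exact_mod_cast determinant α n
  have herr : ((convNum α (n + 1) : ℝ) / convDen α (n + 1) - α) *
      (convDen α (n + 1) * errorDen α n) = (-1) ^ (n + 1) := by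
    have hmul := mul_errorDen hα n
    unfold errorDen at hmul ⊢
    field_simp
    linear_combination hdet - (convDen α (n + 1) : ℝ) * hmul
  rw [eq_div_iff (by positivity)]
  simpa [abs_mul, abs_of_pos hQ, abs_of_pos hD] using congrArg abs herr

theorem abs_convNum_div_convDen_sub_lt (n : ℕ)
    (h : √5 * convDen α (n + 1) < errorDen α n) :
    |(convNum α (n + 1) : ℝ) / convDen α (n + 1) - α| <
      1 / (√5 * (convDen α (n + 1) : ℝ) ^ 2) := by
  have hQ : (0 : ℝ) < convDen α (n + 1) := cast_convDen_succ_pos hα n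
  rw [abs_convNum_div_convDen_sub hα]
  apply one_div_lt_one_div_of_lt (by positivity)
  calc √5 * (convDen α (n + 1) : ℝ) ^ 2 = convDen α (n + 1) * (√5 * convDen α (n + 1)) := by ring
    _ < convDen α (n + 1) * errorDen α n := by gcongr

theorem convDen_div_lt_goldenRatio (n : ℕ) (h₀ : errorDen α n ≤ √5 * convDen α (n + 1))
    (h₁ : errorDen α (n + 1) ≤ √5 * convDen α (n + 2)) :
    (convDen α (n + 2) : ℝ) / convDen α (n + 1) < φ := by
  have hQ₁ : (0 : ℝ) < convDen α (n + 1) := cast_convDen_succ_pos hα n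
  have hQ₂ : (0 : ℝ) < convDen α (n + 2) := cast_convDen_succ_pos hα (n + 1)
  refine lt_of_le_of_ne (le_goldenRatio_of_add_inv_le_sqrt_five (by positivity)
    (completeQuot_succ_pos hα (n + 1)) ?_ ?_) ?_
  · rw [div_add' _ _ _ hQ₁.ne', div_le_iff₀ hQ₁]
    linarith [errorDen_eq α n]
  · rw [inv_div, add_div' _ _ _ hQ₂.ne', div_le_iff₀ hQ₂]
    unfold errorDen at h₁
    linarith
  · intro h
    exact Real.goldenRatio_irrational.ne_rat (convDen α (n + 2) / convDen α (n + 1) : ℚ)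
      (by push_cast; exact h.symm)

theorem exists_sqrt_five_mul_convDen_lt_errorDen (n : ℕ) :
    ∃ k ∈ Set.Icc n (n + 2), √5 * convDen α (k + 1) < errorDen α k := by
  by_contra! hfail
  have hlt₀ := convDen_div_lt_goldenRatio hα n (hfail n (by simp)) (hfail (n + 1) (by simp))
  have hlt₁ := convDen_div_lt_goldenRatio hα (n + 1) (hfail (n + 1) (by simp))
    (hfail (n + 2) (by simp))
  have hQ₁ : (0 : ℝ) < convDen α (n + 1) := cast_convDen_succ_pos hα n
  have hQ₂ : (0 : ℝ) < convDen α (n + 2) := cast_convDen_succ_pos hα (n + 1)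
  have hgold : 1 + φ⁻¹ = φ := by
    rw [Real.inv_goldenRatio, ← sub_eq_add_neg, Real.one_sub_goldenRatio]
  have hinv : 1 + φ⁻¹ < 1 + ((convDen α (n + 2) : ℝ) / convDen α (n + 1))⁻¹ :=
    add_lt_add_right (inv_strictAnti₀ (by positivity) hlt₀) 1
  have hrec : 1 + ((convDen α (n + 2) : ℝ) / convDen α (n + 1))⁻¹ ≤
      (convDen α (n + 3) : ℝ) / convDen α (n + 2) := by
    rw [inv_div, one_add_div hQ₂.ne', div_le_div_iff_of_pos_right hQ₂]
    exact_mod_cast convDen_add_le hα (n + 1)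
  linarith

end Irrational

end Hurwitz

open Hurwitz in
/-- **Hurwitz.** For every irrational real `α` there are infinitely many
pairs of integers `(n, m)` with `m > 0` such that `|n/m - α| < 1/(√5 m²)`; equivalently,
infinitely many positive integers `m` admit such an `n`. -/
theorem hurwitz_approximation (α : ℝ) (hirr : Irrational α) :
    {m : ℕ | 0 < m ∧ ∃ n : ℤ,
      |(n : ℝ) / (m : ℝ) - α| < 1 / (Real.sqrt 5 * (m : ℝ) ^ 2)}.Infinite := by
  refine Set.infinite_of_forall_exists_gt fun b => ?_
  obtain ⟨k, ⟨hbk, -⟩, hk⟩ := exists_sqrt_five_mul_convDen_lt_errorDen hirr (b + 1)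
  refine ⟨convDen α (k + 1), ⟨convDen_succ_pos hirr k, convNum α (k + 1), ?_⟩, ?_⟩
  · exact abs_convNum_div_convDen_sub_lt hirr k hk
  · linarith [le_convDen_succ hirr k]
end

section
/- Let α = φ - 1 = (√5 - 1)/2 and let A > √5 be a real number. Then there exist only finitely many pairs of integers (n, m) with m > 0 satisfying |n/m - α| < 1/(A m²). -/
/-!
Write `α = (√5 - 1)/2 = -ψ` and `β = -φ` for the two roots of `x² + x - 1`, so that
`(n - α m)(n - β m) = n² + n m - m²` is a nonzero integer for `m ≠ 0`. A good approximation
makes `|n - α m| < 1/(A m)`, while `|n - β m| ≤ |n - α m| + √5 m`; multiplying, the norm bound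
`1 ≤ |n - α m| |n - β m|` forces `A (A - √5) m² < 1`, which bounds `m`, and then `n`.
-/

open Real
open scoped goldenRatio

lemma Set.Finite.of_forall_abs_lt {s : Set (ℤ × ℤ)} (C : ℝ)
    (h : ∀ p ∈ s, |(p.1 : ℝ)| < C ∧ |(p.2 : ℝ)| < C) : s.Finite := by
  obtain ⟨N, hN⟩ := exists_int_gt C
  refine (Set.finite_Icc (-N, -N) (N, N)).subset fun p hp => ?_
  obtain ⟨h1, h2⟩ := h p hp
  have h1' : |p.1| ≤ N := by exact_mod_cast (h1.trans hN).le
  have h2' : |p.2| ≤ N := by exact_mod_cast (h2.trans hN).le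
  rw [abs_le] at h1' h2'
  exact ⟨⟨h1'.1, h2'.1⟩, ⟨h1'.2, h2'.2⟩⟩

section Approximation

variable {α β A : ℝ}

lemma abs_sub_mul_lt_of_abs_div_sub_lt {x y : ℝ} (hy : 0 < y)
    (h : |x / y - α| < 1 / (A * y ^ 2)) : |x - α * y| < 1 / (A * y) := by
  have hxy : x - α * y = (x / y - α) * y := by field_simp
  calc |x - α * y| = |x / y - α| * y := by rw [hxy, abs_mul, abs_of_pos hy]
    _ < 1 / (A * y ^ 2) * y := by gcongr
    _ = 1 / (A * y) := by field_simp

lemma mul_sub_abs_sub_mul_sq_lt_one {x y : ℝ} (hy : 0 < y) (hA : |α - β| < A)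
    (hnorm : 1 ≤ |(x - α * y) * (x - β * y)|) (h : |x - α * y| < 1 / (A * y)) :
    A * (A - |α - β|) * y ^ 2 < 1 := by
  rw [abs_mul] at hnorm
  set e := |x - α * y|
  set d := |α - β|
  have hA0 : 0 < A := (abs_nonneg _).trans_lt hA
  have hu : 0 < A * y := by positivity
  have he : e * (A * y) < 1 := by rwa [lt_div_iff₀ hu] at h
  have hconj : |x - β * y| ≤ e + d * y := by
    calc |x - β * y| = |(x - α * y) + (α - β) * y| := by ring_nf
      _ ≤ e + |(α - β) * y| := abs_add_le _ _
      _ = e + d * y := by rw [abs_mul, abs_of_pos hy]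
  have he0 : 0 ≤ e := abs_nonneg _
  -- Scale `1 ≤ e (e + d y)` by `(A y)²` and use `e A y < 1` in both factors.
  have key : (A * y) ^ 2 < 1 + d * y * (A * y) := by
    calc (A * y) ^ 2 ≤ (e * (A * y)) * (e * (A * y) + d * y * (A * y)) := by
          nlinarith [mul_le_mul_of_nonneg_left hconj he0]
      _ < 1 * (1 + d * y * (A * y)) := by
          exact mul_lt_mul'' he (by linarith) (by positivity) (by positivity)
      _ = 1 + d * y * (A * y) := one_mul _
  nlinarith

theorem finite_setOf_abs_div_sub_lt (hA : |α - β| < A)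
    (hnorm : ∀ n m : ℤ, 0 < m → 1 ≤ |(n - α * m) * (n - β * m)|) :
    {p : ℤ × ℤ | 0 < p.2 ∧ |(p.1 : ℝ) / p.2 - α| < 1 / (A * (p.2 : ℝ) ^ 2)}.Finite := by
  have hA0 : 0 < A := (abs_nonneg _).trans_lt hA
  set C := 1 / (A * (A - |α - β|))
  refine Set.Finite.of_forall_abs_lt (C + |α| * C + 1 / A) fun ⟨n, m⟩ ⟨hm, happrox⟩ => ?_
  have hm1 : (1 : ℝ) ≤ m := by exact_mod_cast hm
  have hm0 : (0 : ℝ) < m := by linarith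
  have hclose := abs_sub_mul_lt_of_abs_div_sub_lt hm0 happrox
  have hsq := mul_sub_abs_sub_mul_sq_lt_one hm0 hA (hnorm n m hm) hclose
  have hmC : (m : ℝ) < C := by
    rw [lt_div_iff₀ (mul_pos hA0 (by linarith))]
    nlinarith
  have hnm : |(n : ℝ)| < |α| * m + 1 / A := by
    calc |(n : ℝ)| = |α * m + (n - α * m)| := by ring_nf
      _ ≤ |α * m| + |n - α * m| := abs_add_le _ _
      _ < |α| * m + 1 / A := by
        rw [abs_mul, abs_of_pos hm0]
        gcongr
        exact hclose.trans_le (one_div_le_one_div_of_le hA0 (by nlinarith))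
  simp only [abs_of_pos hm0]
  constructor
  · nlinarith [abs_nonneg α, mul_le_mul_of_nonneg_left hmC.le (abs_nonneg α)]
  · nlinarith [abs_nonneg α, one_div_pos.mpr hA0]

end Approximation

lemma goldenConj_goldenRatio_norm (x y : ℝ) :
    (x + ψ * y) * (x + φ * y) = x ^ 2 + x * y - y ^ 2 := by
  linear_combination x * y * goldenRatio_add_goldenConj + y ^ 2 * goldenRatio_mul_goldenConj

lemma sq_add_mul_sub_sq_ne_zero {n m : ℤ} (hm : m ≠ 0) : n ^ 2 + n * m - m ^ 2 ≠ 0 := by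
  have hirr {x : ℝ} (hx : Irrational x) : (n : ℝ) + x * m ≠ 0 :=
    ((hx.mul_intCast hm).intCast_add n).ne_zero
  intro h
  have hR : ((n : ℝ) + ψ * m) * (n + φ * m) = 0 := by
    rw [goldenConj_goldenRatio_norm]; exact_mod_cast h
  rcases mul_eq_zero.mp hR with hψ | hφ
  · exact hirr goldenConj_irrational hψ
  · exact hirr goldenRatio_irrational hφ

lemma one_le_abs_goldenConj_goldenRatio_norm {n m : ℤ} (hm : 0 < m) :
    1 ≤ |((n : ℝ) - -ψ * m) * (n - -φ * m)| := by
  simp only [neg_mul, sub_neg_eq_add, goldenConj_goldenRatio_norm]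
  exact_mod_cast Int.one_le_abs (sq_add_mul_sub_sq_ne_zero hm.ne')

/-- Let `α = φ - 1 = (√5 - 1)/2` and `A > √5`. Then only finitely many
pairs of integers `(n, m)` with `m > 0` satisfy `|n/m - α| < 1/(A m²)`. -/
theorem golden_ratio_approximation_finite (A : ℝ) (hA : Real.sqrt 5 < A) :
    {p : ℤ × ℤ | 0 < p.2 ∧
      |(p.1 : ℝ) / (p.2 : ℝ) - (Real.sqrt 5 - 1) / 2| <
        1 / (A * (p.2 : ℝ) ^ 2)}.Finite := by
  have hα : (√5 - 1) / 2 = -ψ := by ring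
  have hdist : |-ψ - -φ| = √5 := by
    rw [neg_sub_neg, goldenRatio_sub_goldenConj, abs_of_pos (by positivity)]
  rw [hα]
  exact finite_setOf_abs_div_sub_lt (hdist ▸ hA) fun _ _ => one_le_abs_goldenConj_goldenRatio_norm
end

section
/- For j > 1, let k_j = lp(F_j)/F_j be the exponent of the longest prefix of the Fibonacci infinite word that is an abelian repetition of period F_j, where lp(F_j) = F_j(F_{j+1}+F_{j-1}+1) - 2 for even j and F_j(F_{j+1}+F_{j-1}) - 2 for odd j. Then lim_{j→∞} k_j / F_j = √5. -/
/-- Fibonacci numbers with the indexing `F 0 = 1`, `F 1 = 1`, `F (j+1) = F j + F (j-1)`. -/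
def F (j : ℕ) : ℕ := Nat.fib (j + 1)

/-- The length of the longest prefix of the Fibonacci infinite word that is an abelian
repetition of period `F j` (for `j > 1`). -/
def lpFib (j : ℕ) : ℕ :=
  if Even j then F j * (F (j + 1) + F (j - 1) + 1) - 2
  else F j * (F (j + 1) + F (j - 1)) - 2

/-!
Writing `L j = F (j + 1) + F (j - 1)` for the Lucas numbers, Binet's formula gives
`L j - √5 * F j = 2 * ψ ^ (j + 1)`, which is bounded because `|ψ| < 1`. Since
`lpFib j = F j * (L j + e) - 2` with `e ∈ {0, 1}`, it follows that
`lpFib j / F j ^ 2 = √5 + O(1 / F j)`, and `F j → ∞`.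
-/

open Filter Real
open scoped goldenRatio

theorem Real.fib_add_two_add_fib_sub_sqrt_five_mul_fib_add_one (n : ℕ) :
    (Nat.fib (n + 2) + Nat.fib n : ℝ) - √5 * Nat.fib (n + 1) = 2 * ψ ^ (n + 1) := by
  rw [← fib_succ_sub_goldenRatio_mul_fib, ← goldenRatio_sub_goldenConj, Nat.fib_add_two,
    Nat.cast_add]
  linear_combination (Nat.fib (n + 1) : ℝ) * goldenRatio_add_goldenConj

theorem Real.abs_goldenConj_pow_le_one (n : ℕ) : |ψ ^ n| ≤ 1 := by
  rw [abs_pow]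
  exact pow_le_one₀ (abs_nonneg ψ)
    (abs_le.mpr ⟨neg_one_lt_goldenConj.le, goldenConj_neg.le.trans zero_le_one⟩)

theorem one_le_F (j : ℕ) : 1 ≤ F j := Nat.fib_pos.mpr j.succ_pos

theorem tendsto_F_atTop : Tendsto F atTop atTop :=
  (tendsto_add_atTop_iff_nat 1).mp Nat.fib_add_two_strictMono.tendsto_atTop

theorem F_add_one_add_F_sub_one_sub_sqrt_five_mul_F {j : ℕ} (hj : 1 ≤ j) :
    (F (j + 1) + F (j - 1) : ℝ) - √5 * F j = 2 * ψ ^ (j + 1) := by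
  obtain ⟨n, rfl⟩ := Nat.exists_eq_add_of_le' hj
  exact fib_add_two_add_fib_sub_sqrt_five_mul_fib_add_one (n + 1)

theorem cast_lpFib (j : ℕ) :
    (lpFib j : ℝ) = F j * (F (j + 1) + F (j - 1) + if Even j then 1 else 0) - 2 := by
  have h2 : 2 ≤ F j * (F (j + 1) + F (j - 1)) :=
    le_mul_of_one_le_of_le (one_le_F j) (add_le_add (one_le_F _) (one_le_F _))
  unfold lpFib
  split_ifs
  · rw [Nat.cast_sub (h2.trans (Nat.mul_le_mul_left _ (Nat.le_succ _)))]
    push_cast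
    ring
  · rw [Nat.cast_sub h2]
    push_cast
    ring

theorem lpFib_div_F_div_F_sub_sqrt_five {j : ℕ} (hj : 1 ≤ j) :
    (lpFib j : ℝ) / F j / F j - √5 =
      (2 * ψ ^ (j + 1) + (if Even j then 1 else 0) - 2 / F j) / F j := by
  have hF : (F j : ℝ) ≠ 0 := by exact_mod_cast Nat.one_le_iff_ne_zero.mp (one_le_F j)
  rw [cast_lpFib]
  field_simp
  linear_combination (F j : ℝ) * F_add_one_add_F_sub_one_sub_sqrt_five_mul_F hj

theorem abs_lpFib_div_F_div_F_sub_sqrt_five_le {j : ℕ} (hj : 1 ≤ j) :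
    |(lpFib j : ℝ) / F j / F j - √5| ≤ 5 / F j := by
  have hF : (1 : ℝ) ≤ F j := by exact_mod_cast one_le_F j
  have hψ := abs_goldenConj_pow_le_one (j + 1)
  have he : |(if Even j then 1 else 0 : ℝ)| ≤ 1 := by split_ifs <;> norm_num
  have h2 : |2 / (F j : ℝ)| ≤ 2 := by
    rw [abs_of_nonneg (by positivity)]
    exact div_le_self zero_le_two hF
  rw [lpFib_div_F_div_F_sub_sqrt_five hj, abs_div, abs_of_pos (one_pos.trans_le hF)]
  gcongr
  calc _ ≤ |2 * ψ ^ (j + 1) + (if Even j then 1 else 0 : ℝ)| + |2 / (F j : ℝ)| := abs_sub _ _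
    _ ≤ |2 * ψ ^ (j + 1)| + |(if Even j then 1 else 0 : ℝ)| + |2 / (F j : ℝ)| := by
      gcongr
      exact abs_add_le _ _
    _ ≤ 5 := by
      rw [abs_mul, abs_two]
      linarith

/-- With `k_j = lp(F_j)/F_j` the exponent of the longest abelian-repetition
prefix of period `F_j` of the Fibonacci word, one has `lim_{j→∞} k_j / F_j = √5`. -/
theorem fibonacci_abelian_exponent_limit :
    Filter.Tendsto (fun j : ℕ => (lpFib j : ℝ) / (F j : ℝ) / (F j : ℝ))
      Filter.atTop (nhds (Real.sqrt 5)) := by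
  rw [← tendsto_sub_nhds_zero_iff]
  have h5 : Tendsto (fun j => 5 / (F j : ℝ)) atTop (nhds 0) :=
    tendsto_const_nhds.div_atTop (tendsto_natCast_atTop_atTop.comp tendsto_F_atTop)
  refine squeeze_zero_norm' ?_ h5
  filter_upwards [eventually_ge_atTop 1] with j hj
  exact abs_lpFib_div_F_div_F_sub_sqrt_five_le hj
end
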